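/- arXiv:1410.4119 — 2 statements merged into one kernel-verified Lean document; each statement's English description precedes it below -/
import Mathlib

section
/- Let $V$ be a complex Banach space, $\mathcal{A}=[K_{min},K_{max}]\subset(0,\infty)$, and $C_0, D>0$. Then there exists $C>0$ depending only on $\mathcal{A}$, $C_0$ and $D$ such that for every holomorphic function $g\colon B(0,K_{max})\to V$ with $\|g(0)\|\ge C_0$ and $\sup_{\omega\in B(0,K_{max})}\|g(\omega)\|\le D$, there exists $\omega\in\mathcal{A}$ with $\|g(\omega)\|\ge C$. -/
/-!
Composing with a norming functional (Hahn–Banach) reduces the theorem to scalar functions.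
For scalar `f`, Cauchy's estimates put the Taylor coefficients of `f` at `0` in the set of
sequences with `‖a k‖ ≤ D / r ^ k` (for a fixed `r < Kmax`), which is compact in the product
topology by Tychonoff; this plays the role of Montel's theorem. Evaluating the power series
at a point `z` with `‖z‖ < r` is continuous on that set, and by the identity theorem a power
series with `‖a 0‖ ≥ C0 > 0` cannot vanish on an interval. Compactness turns this pointwise
non-vanishing into a uniform lower bound.
-/

open Metric Set
open Filter Topology FormalMultilinearSeries

theorem IsCompact.exists_pos_forall_exists_le {X ι : Type*} [TopologicalSpace X] {K : Set X}
    (hK : IsCompact K) {h : ι → X → ℝ} (hh : ∀ i, ContinuousOn (h i) K)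
    (hpos : ∀ a ∈ K, ∃ i, 0 < h i a) : ∃ C > 0, ∀ a ∈ K, ∃ i, C ≤ h i a := by
  refine hK.induction_on (p := fun t ↦ ∃ C > 0, ∀ a ∈ t, ∃ i, C ≤ h i a)
    ⟨1, one_pos, by simp⟩ (fun s t hst ⟨C, hC, ht⟩ ↦ ⟨C, hC, fun a ha ↦ ht a (hst ha)⟩)
    ?_ fun a ha ↦ ?_
  · rintro s t ⟨C, hC, hs⟩ ⟨C', hC', ht⟩
    refine ⟨min C C', lt_min hC hC', fun a ha ↦ ha.elim (fun ha ↦ ?_) fun ha ↦ ?_⟩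
    · exact (hs a ha).imp fun i hi ↦ (min_le_left _ _).trans hi
    · exact (ht a ha).imp fun i hi ↦ (min_le_right _ _).trans hi
  · obtain ⟨i, hi⟩ := hpos a ha
    exact ⟨_, (hh i a ha).eventually_const_lt (half_lt_self hi), h i a / 2, half_pos hi,
      fun b hb ↦ ⟨i, hb.le⟩⟩

def cauchyBoundedCoeffs (D r : ℝ) : Set (ℕ → ℂ) :=
  univ.pi fun k ↦ closedBall 0 (D / r ^ k)

noncomputable def taylorCoeff (f : ℂ → ℂ) (k : ℕ) : ℂ :=
  (k.factorial : ℂ)⁻¹ * iteratedDeriv k f 0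

section CauchyBoundedCoeffs

variable {D r : ℝ} {a : ℕ → ℂ}

theorem isCompact_cauchyBoundedCoeffs : IsCompact (cauchyBoundedCoeffs D r) :=
  isCompact_univ_pi fun _ ↦ isCompact_closedBall _ _

theorem norm_le_of_mem_cauchyBoundedCoeffs (ha : a ∈ cauchyBoundedCoeffs D r) (k : ℕ) :
    ‖a k‖ ≤ D / r ^ k :=
  mem_closedBall_zero_iff.1 (ha k (mem_univ k))

theorem norm_smul_pow_le_of_mem_cauchyBoundedCoeffs (ha : a ∈ cauchyBoundedCoeffs D r)
    (k : ℕ) (z : ℂ) : ‖a k • z ^ k‖ ≤ D * (‖z‖ / r) ^ k :=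
  calc ‖a k • z ^ k‖ = ‖a k‖ * ‖z‖ ^ k := by rw [norm_smul, norm_pow]
    _ ≤ D / r ^ k * ‖z‖ ^ k := by gcongr; exact norm_le_of_mem_cauchyBoundedCoeffs ha k
    _ = D * (‖z‖ / r) ^ k := by rw [div_pow]; ring

theorem le_radius_ofScalars (ha : a ∈ cauchyBoundedCoeffs D r) (hr : 0 < r) :
    ENNReal.ofReal r ≤ (ofScalars ℂ a).radius := by
  refine le_radius_of_bound _ D fun k ↦ ?_
  rw [ofScalars_norm ℂ a k, Real.coe_toNNReal _ hr.le, ← le_div_iff₀ (pow_pos hr k)]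
  exact norm_le_of_mem_cauchyBoundedCoeffs ha k

theorem analyticOnNhd_ofScalarsSum (ha : a ∈ cauchyBoundedCoeffs D r) :
    AnalyticOnNhd ℂ (ofScalarsSum a) (ball (0 : ℂ) r) := by
  intro z hz
  have hr := le_radius_ofScalars ha (pos_of_mem_ball hz)
  rw [ofScalarsSum]
  refine ((ofScalars ℂ a).hasFPowerSeriesOnBall ?_).analyticAt_of_mem ?_
  · exact (ENNReal.ofReal_pos.2 (pos_of_mem_ball hz)).trans_le hr
  · exact eball_subset_eball hr (by rwa [eball_ofReal])

theorem continuousOn_ofScalarsSum_apply {z : ℂ} (hz : ‖z‖ < r) :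
    ContinuousOn (fun a ↦ ofScalarsSum a z) (cauchyBoundedCoeffs D r) := by
  have hr : 0 < r := (norm_nonneg z).trans_lt hz
  simp only [ofScalarsSum_eq_tsum]
  refine continuousOn_tsum (fun k ↦ ((continuous_apply k).smul continuous_const).continuousOn)
    ((summable_geometric_of_lt_one (by positivity) ((div_lt_one hr).2 hz)).mul_left D)
    fun k a ha ↦ norm_smul_pow_le_of_mem_cauchyBoundedCoeffs ha k z

theorem exists_ofScalarsSum_ne_zero (ha : a ∈ cauchyBoundedCoeffs D r) (ha0 : a 0 ≠ 0)
    {s : Set ℂ} {z₀ : ℂ} (hz₀ : z₀ ∈ ball 0 r) (hacc : ∃ᶠ z in 𝓝[≠] z₀, z ∈ s) :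
    ∃ z ∈ s, ofScalarsSum a z ≠ 0 := by
  by_contra! h
  have hzero := (analyticOnNhd_ofScalarsSum ha).eqOn_zero_of_preconnected_of_frequently_eq_zero
    (convex_ball 0 r).isPreconnected hz₀ (hacc.mono h)
  exact ha0 (by simpa using hzero (mem_ball_self (pos_of_mem_ball hz₀)))

theorem taylorCoeff_mem_cauchyBoundedCoeffs {R : ℝ} {f : ℂ → ℂ}
    (hf : DifferentiableOn ℂ f (ball 0 R)) (hfD : ∀ z ∈ ball 0 R, ‖f z‖ ≤ D)
    (hr : 0 < r) (hrR : r < R) : taylorCoeff f ∈ cauchyBoundedCoeffs D r := by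
  intro k _
  have hcauchy := Complex.norm_iteratedDeriv_le_of_forall_mem_sphere_norm_le k hr
    (hf.diffContOnCl_ball (closedBall_subset_ball hrR))
    fun z hz ↦ hfD z (sphere_subset_closedBall.trans (closedBall_subset_ball hrR) hz)
  rw [mem_closedBall_zero_iff, taylorCoeff, norm_mul, norm_inv, Complex.norm_natCast,
    inv_mul_le_iff₀ (by positivity)]
  exact hcauchy.trans_eq (mul_div_assoc _ _ _)

end CauchyBoundedCoeffs

theorem ofScalarsSum_taylorCoeff {R : ℝ} {f : ℂ → ℂ}
    (hf : DifferentiableOn ℂ f (ball 0 R)) {z : ℂ} (hz : z ∈ ball 0 R) :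
    ofScalarsSum (taylorCoeff f) z = f z := by
  rw [ofScalarsSum_eq_tsum, ← Complex.taylorSeries_eq_on_ball' hz hf]
  simp [taylorCoeff]

theorem exists_pos_forall_exists_le_norm_of_frequently {R r C0 D : ℝ} {s : Set ℂ} {z₀ : ℂ}
    (hrR : r < R) (hs : s ⊆ ball 0 r) (hz₀ : z₀ ∈ ball 0 r)
    (hacc : ∃ᶠ z in 𝓝[≠] z₀, z ∈ s) (hC0 : 0 < C0) :
    ∃ C > 0, ∀ f : ℂ → ℂ, DifferentiableOn ℂ f (ball 0 R) → C0 ≤ ‖f 0‖ →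
      (∀ z ∈ ball 0 R, ‖f z‖ ≤ D) → ∃ z ∈ s, C ≤ ‖f z‖ := by
  set K := cauchyBoundedCoeffs D r ∩ {a | C0 ≤ ‖a 0‖}
  have hK : IsCompact K := isCompact_cauchyBoundedCoeffs.inter_right
    (isClosed_le continuous_const (continuous_apply 0).norm)
  obtain ⟨C, hC, hCK⟩ := hK.exists_pos_forall_exists_le
    (h := fun (z : s) (a : ℕ → ℂ) ↦ ‖ofScalarsSum a (z : ℂ)‖)
    (fun z ↦ (continuousOn_ofScalarsSum_apply (mem_ball_zero_iff.1 (hs z.2))).norm.mono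
      inter_subset_left)
    fun a ⟨ha, ha0⟩ ↦ by
      obtain ⟨z, hz, hFz⟩ := exists_ofScalarsSum_ne_zero ha
        (norm_pos_iff.1 (hC0.trans_le ha0)) hz₀ hacc
      exact ⟨⟨z, hz⟩, norm_pos_iff.2 hFz⟩
  refine ⟨C, hC, fun f hf hf0 hfD ↦ ?_⟩
  obtain ⟨⟨z, hz⟩, hCz⟩ := hCK (taylorCoeff f)
    ⟨taylorCoeff_mem_cauchyBoundedCoeffs hf hfD (pos_of_mem_ball hz₀) hrR,
      by simpa [taylorCoeff]⟩
  rw [ofScalarsSum_taylorCoeff hf (ball_subset_ball hrR.le (hs hz))] at hCz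
  exact ⟨z, hz, hCz⟩

theorem Complex.frequently_mem_ofReal_image_Icc {a b : ℝ} (hab : a < b) :
    ∃ᶠ z in 𝓝[≠] (a : ℂ), z ∈ ((↑) : ℝ → ℂ) '' Icc a b := by
  have hofReal : Tendsto ((↑) : ℝ → ℂ) (𝓝[>] a) (𝓝[≠] (a : ℂ)) :=
    tendsto_nhdsWithin_iff.2 ⟨Complex.continuous_ofReal.continuousWithinAt.tendsto,
      eventually_nhdsWithin_of_forall fun x hx ↦ Complex.ofReal_injective.ne hx.ne'⟩
  exact hofReal.frequently
    ((Eventually.frequently (Icc_mem_nhdsGT hab)).mono fun x hx ↦ mem_image_of_mem _ hx)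

theorem quantitative_unique_continuation_general
    (V : Type*) [NormedAddCommGroup V] [NormedSpace ℂ V]
    (Kmin Kmax C0 D : ℝ) (hKmin : 0 < Kmin) (hK : Kmin < Kmax)
    (hC0 : 0 < C0) :
    ∃ C > 0, ∀ g : ℂ → V,
      DifferentiableOn ℂ g (ball (0 : ℂ) Kmax) →
      C0 ≤ ‖g 0‖ →
      (∀ ω ∈ ball (0 : ℂ) Kmax, ‖g ω‖ ≤ D) →
      ∃ ω ∈ Icc Kmin Kmax, C ≤ ‖g (ω : ℂ)‖ := by
  obtain ⟨m, hKm, hmK⟩ := exists_between hK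
  obtain ⟨r, hmr, hrK⟩ := exists_between hmK
  have hs : ((↑) : ℝ → ℂ) '' Icc Kmin m ⊆ ball 0 r := by
    rintro _ ⟨x, hx, rfl⟩
    rw [mem_ball_zero_iff, Complex.norm_real, Real.norm_of_nonneg (hKmin.le.trans hx.1)]
    exact hx.2.trans_lt hmr
  obtain ⟨C, hC, hscalar⟩ := exists_pos_forall_exists_le_norm_of_frequently hrK hs
    (hs (mem_image_of_mem _ (left_mem_Icc.2 hKm.le)))
    (Complex.frequently_mem_ofReal_image_Icc hKm) hC0
  refine ⟨C, hC, fun g hg hg0 hgD ↦ ?_⟩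
  obtain ⟨ℓ, hℓ, hℓg⟩ := exists_dual_vector'' ℂ (g 0)
  have hℓle (v : V) : ‖ℓ v‖ ≤ ‖v‖ :=
    (ℓ.le_opNorm v).trans (mul_le_of_le_one_left (norm_nonneg v) hℓ)
  obtain ⟨_, ⟨ω, hω, rfl⟩, hCω⟩ := hscalar (ℓ ∘ g) (ℓ.differentiable.comp_differentiableOn hg)
    (by simpa [hℓg] using hg0) fun z hz ↦ (hℓle _).trans (hgD z hz)
  exact ⟨ω, ⟨hω.1, hω.2.trans hmK.le⟩, hCω.trans (hℓle _)⟩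

/-- Quantitative unique continuation for vector-valued holomorphic functions:
a uniform lower bound at `0` together with a uniform upper bound on the disc
forces a lower bound, uniform over all such `g`, at some frequency in `[Kmin, Kmax]`. -/
theorem quantitative_unique_continuation
    (V : Type*) [NormedAddCommGroup V] [NormedSpace ℂ V] [CompleteSpace V]
    (Kmin Kmax C0 D : ℝ) (hKmin : 0 < Kmin) (hK : Kmin < Kmax)
    (hC0 : 0 < C0) (hD : 0 < D) :
    ∃ C > 0, ∀ g : ℂ → V,
      DifferentiableOn ℂ g (ball (0 : ℂ) Kmax) →
      C0 ≤ ‖g 0‖ →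
      (∀ ω ∈ ball (0 : ℂ) Kmax, ‖g ω‖ ≤ D) →
      ∃ ω ∈ Icc Kmin Kmax, C ≤ ‖g (ω : ℂ)‖ :=
  quantitative_unique_continuation_general V Kmin Kmax C0 D hKmin hK hC0
end

section
/- Let $H_1,H_2$ be Hilbert spaces, $Q\subset H_1$ closed convex, $F\colon Q\to H_2$ Fréchet differentiable with Lipschitz constant $L$ (i.e., $\|DF[q]\|\le L$ for all $q\in Q$) and satisfying the lower bound $\|DF[q](\rho)\|\ge C\|\rho\|$ for all $q\in Q$, $\rho\in H_1$, together with the tangential cone-type condition $\|F(q)-F(\tilde q)-DF[\tilde q](q-\tilde q)\|\le \eta\|F(q)-F(\tilde q)\|$ for some $\eta<1/2$ in a neighborhood of the solution $q^*$ with $F(q^*)=0$. Then the projected Landweber iteration $q_{n+1}=T(q_n-h\,DF[q_n]^*F(q_n))$ converges to $q^*$ provided $h$ and $\|q_0-q^*\|$ are small enough. -/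
open Filter Topology

open RealInnerProductSpace

set_option maxHeartbeats 1000000 in
/-- Abstract convergence of the projected Landweber iteration (Hanke–Neubauer–Scherzer):
under a uniform Lipschitz bound and a uniform lower bound on the Fréchet derivative,
together with a tangential cone condition near the solution, the projected Landweber
iteration converges to the solution `qstar` provided the step size `h` and the initial
error `‖q0 - qstar‖` are small enough. -/
theorem landweber_convergence
    (H1 H2 : Type*) [NormedAddCommGroup H1] [InnerProductSpace ℝ H1] [CompleteSpace H1]
    [NormedAddCommGroup H2] [InnerProductSpace ℝ H2] [CompleteSpace H2]
    (Q : Set H1) (hcl : IsClosed Q) (hconv : Convex ℝ Q)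
    (T : H1 → H1)
    (hT : ∀ x : H1, T x ∈ Q ∧ ∀ q ∈ Q, ‖x - T x‖ ≤ ‖x - q‖)
    (F : H1 → H2) (DF : H1 → (H1 →L[ℝ] H2))
    (hDF : ∀ q ∈ Q, HasFDerivAt F (DF q) q)
    (L C : ℝ) (hL : 0 < L) (hC : 0 < C)
    (hLip : ∀ q ∈ Q, ‖DF q‖ ≤ L)
    (hlower : ∀ q ∈ Q, ∀ ρ : H1, C * ‖ρ‖ ≤ ‖DF q ρ‖)
    (qstar : H1) (hqstar : qstar ∈ Q) (hFstar : F qstar = 0)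
    (η : ℝ) (hη : η < 1 / 2)
    (U : Set H1) (hU : U ∈ nhds qstar)
    (hcone : ∀ q ∈ Q ∩ U, ∀ q' ∈ Q ∩ U,
      ‖F q - F q' - DF q' (q - q')‖ ≤ η * ‖F q - F q'‖) :
    ∃ ε > 0, ∀ h : ℝ, 0 < h → h < ε →
      ∀ q0 ∈ Q, ‖q0 - qstar‖ < ε →
        ∀ qseq : ℕ → H1, qseq 0 = q0 →
          (∀ n, qseq (n + 1) =
            T (qseq n - h • (ContinuousLinearMap.adjoint (DF (qseq n))) (F (qseq n)))) →
          Tendsto qseq atTop (nhds qstar) := by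
  -- choose a ball around qstar inside U
  obtain ⟨r, hr, hrU⟩ := Metric.mem_nhds_iff.mp hU
  have hqstarU : qstar ∈ U := mem_of_mem_nhds hU
  refine ⟨min r (L ^ 2)⁻¹, lt_min hr (by positivity), ?_⟩
  intro h hh0 hhε q0 hq0Q hq0ε qseq hseq0 hrec
  set ε := min r (L ^ 2)⁻¹ with hεdef
  -- membership in U from smallness of the error
  have memU : ∀ q : H1, ‖q - qstar‖ < ε → q ∈ U := by
    intro q hq
    apply hrU
    rw [Metric.mem_ball, dist_eq_norm]
    exact lt_of_lt_of_le hq (min_le_left _ _)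
  -- tangential cone consequence near qstar
  have cone' : ∀ q ∈ Q, ‖q - qstar‖ < ε → ‖F q - DF q (q - qstar)‖ ≤ η * ‖F q‖ := by
    intro q hqQ hqε
    have hc := hcone qstar ⟨hqstar, hqstarU⟩ q ⟨hqQ, memU q hqε⟩
    rw [hFstar] at hc
    have h1 : F q - DF q (q - qstar) = -(0 - F q - DF q (qstar - q)) := by
      rw [map_sub, map_sub]
      abel
    rw [h1, norm_neg]
    calc ‖0 - F q - DF q (qstar - q)‖ ≤ η * ‖0 - F q‖ := hc
      _ = η * ‖F q‖ := by rw [zero_sub, norm_neg]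
  -- nonexpansiveness of the projection toward qstar
  have proj : ∀ x : H1, ‖T x - qstar‖ ^ 2 ≤ ‖x - qstar‖ ^ 2 := by
    intro x
    obtain ⟨hTxQ, hTxmin⟩ := hT x
    have hinf : ‖x - T x‖ = ⨅ w : Q, ‖x - w‖ := by
      haveI : Nonempty Q := ⟨⟨qstar, hqstar⟩⟩
      refine le_antisymm (le_ciInf fun w => hTxmin w w.2) ?_
      have hbb : BddBelow (Set.range fun w : Q => ‖x - w‖) := by
        refine ⟨0, ?_⟩
        rintro y ⟨w, rfl⟩
        exact norm_nonneg _
      exact ciInf_le hbb ⟨T x, hTxQ⟩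
    have hchar := (norm_eq_iInf_iff_real_inner_le_zero hconv hTxQ).mp hinf
    have h1 : ⟪x - T x, qstar - T x⟫ ≤ 0 := hchar qstar hqstar
    have h2 : ‖(x - T x) + (T x - qstar)‖ ^ 2
        = ‖x - T x‖ ^ 2 + 2 * ⟪x - T x, T x - qstar⟫ + ‖T x - qstar‖ ^ 2 :=
      norm_add_sq_real _ _
    have h3 : (x - T x) + (T x - qstar) = x - qstar := by abel
    have h4 : ⟪x - T x, T x - qstar⟫ = -⟪x - T x, qstar - T x⟫ := by
      rw [← inner_neg_right]
      congr 1
      abel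
    rw [h3] at h2
    nlinarith [sq_nonneg ‖x - T x‖]
  -- the step constant
  set c := h * (2 * (1 - η) - h * L ^ 2) with hcdef
  have hhL : h * L ^ 2 < 1 := by
    have h1 : h < (L ^ 2)⁻¹ := lt_of_lt_of_le hhε (min_le_right _ _)
    have h2 : (0:ℝ) < L ^ 2 := by positivity
    calc h * L ^ 2 < (L ^ 2)⁻¹ * L ^ 2 := by exact mul_lt_mul_of_pos_right h1 h2
      _ = 1 := inv_mul_cancel₀ (ne_of_gt h2)
  have hc : 0 < c := by
    apply mul_pos hh0
    nlinarith
  -- the main one-step estimate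
  have step : ∀ n : ℕ, qseq n ∈ Q → ‖qseq n - qstar‖ < ε →
      qseq (n + 1) ∈ Q ∧
        ‖qseq (n + 1) - qstar‖ ^ 2 + c * ‖F (qseq n)‖ ^ 2 ≤ ‖qseq n - qstar‖ ^ 2 := by
    intro n hQn hεn
    set q := qseq n with hq
    set A := DF q with hA
    set v := (ContinuousLinearMap.adjoint A) (F q) with hv
    set x := q - h • v with hx
    have hnext : qseq (n + 1) = T x := hrec n
    refine ⟨hnext ▸ (hT x).1, ?_⟩
    -- cone estimate
    have hce : ‖F q - A (q - qstar)‖ ≤ η * ‖F q‖ := cone' q hQn hεn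
    -- inner product lower bound
    have ib : (1 - η) * ‖F q‖ ^ 2 ≤ ⟪q - qstar, v⟫ := by
      have h1 : ⟪q - qstar, v⟫ = ⟪A (q - qstar), F q⟫ :=
        ContinuousLinearMap.adjoint_inner_right A (q - qstar) (F q)
      have h2 : ⟪A (q - qstar), F q⟫
          = ⟪F q, F q⟫ - ⟪F q - A (q - qstar), F q⟫ := by
        rw [← inner_sub_left]
        congr 1
        abel
      have h3 : ⟪F q - A (q - qstar), F q⟫ ≤ ‖F q - A (q - qstar)‖ * ‖F q‖ :=
        real_inner_le_norm _ _
      have h4 : ‖F q - A (q - qstar)‖ * ‖F q‖ ≤ η * ‖F q‖ * ‖F q‖ :=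
        mul_le_mul_of_nonneg_right hce (norm_nonneg _)
      have h5 : ⟪F q, F q⟫ = ‖F q‖ ^ 2 := real_inner_self_eq_norm_sq _
      rw [h1, h2, h5]
      nlinarith
    -- norm bound on v
    have nb : ‖v‖ ≤ L * ‖F q‖ := by
      have h1 : ‖v‖ ≤ ‖ContinuousLinearMap.adjoint A‖ * ‖F q‖ :=
        (ContinuousLinearMap.adjoint A).le_opNorm (F q)
      have h2 : ‖ContinuousLinearMap.adjoint A‖ = ‖A‖ :=
        ContinuousLinearMap.adjoint.norm_map A
      calc ‖v‖ ≤ ‖ContinuousLinearMap.adjoint A‖ * ‖F q‖ := h1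
        _ = ‖A‖ * ‖F q‖ := by rw [h2]
        _ ≤ L * ‖F q‖ := mul_le_mul_of_nonneg_right (hLip q hQn) (norm_nonneg _)
    -- expansion of the pre-projection error
    have expand : ‖x - qstar‖ ^ 2
        = ‖q - qstar‖ ^ 2 - 2 * (h * ⟪q - qstar, v⟫) + h ^ 2 * ‖v‖ ^ 2 := by
      have h1 : x - qstar = (q - qstar) - h • v := by rw [hx]; abel
      rw [h1, norm_sub_sq_real, real_inner_smul_right, norm_smul]
      have : ‖h‖ = h := abs_of_pos hh0
      rw [this, mul_pow]
    have key : ‖x - qstar‖ ^ 2 + c * ‖F q‖ ^ 2 ≤ ‖q - qstar‖ ^ 2 := by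
      rw [expand, hcdef]
      have hv2 : ‖v‖ ^ 2 ≤ (L * ‖F q‖) ^ 2 :=
        pow_le_pow_left₀ (norm_nonneg _) nb 2
      have t1 : 2 * h * ((1 - η) * ‖F q‖ ^ 2) ≤ 2 * h * ⟪q - qstar, v⟫ :=
        mul_le_mul_of_nonneg_left ib (by positivity)
      have t2 : h ^ 2 * ‖v‖ ^ 2 ≤ h ^ 2 * (L * ‖F q‖) ^ 2 :=
        mul_le_mul_of_nonneg_left hv2 (sq_nonneg h)
      nlinarith [t1, t2]
    have hproj : ‖qseq (n + 1) - qstar‖ ^ 2 ≤ ‖x - qstar‖ ^ 2 := by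
      rw [hnext]; exact proj x
    linarith
  -- the invariant: all iterates stay in Q and close to qstar
  have inv : ∀ n : ℕ, qseq n ∈ Q ∧ ‖qseq n - qstar‖ < ε := by
    intro n
    induction n with
    | zero => exact ⟨hseq0 ▸ hq0Q, hseq0 ▸ hq0ε⟩
    | succ n ih =>
      obtain ⟨hQn, hεn⟩ := ih
      obtain ⟨hQn1, hkey⟩ := step n hQn hεn
      have h1 : ‖qseq (n + 1) - qstar‖ ^ 2 ≤ ‖qseq n - qstar‖ ^ 2 := by
        nlinarith [sq_nonneg ‖F (qseq n)‖]
      have h2 : ‖qseq (n + 1) - qstar‖ ≤ ‖qseq n - qstar‖ := by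
        nlinarith [norm_nonneg (qseq (n + 1) - qstar), norm_nonneg (qseq n - qstar)]
      exact ⟨hQn1, lt_of_le_of_lt h2 hεn⟩
  -- the squared errors converge
  set a : ℕ → ℝ := fun n => ‖qseq n - qstar‖ ^ 2 with hadef
  have hdec : ∀ n, a (n + 1) ≤ a n := by
    intro n
    have := (step n (inv n).1 (inv n).2).2
    simp only [hadef]
    nlinarith [sq_nonneg ‖F (qseq n)‖]
  have hant : Antitone a := antitone_nat_of_succ_le hdec
  have hbdd : BddBelow (Set.range a) := by
    refine ⟨0, ?_⟩
    rintro y ⟨n, rfl⟩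
    exact sq_nonneg _
  have hconvA : Tendsto a atTop (𝓝 (⨅ n, a n)) := tendsto_atTop_ciInf hant hbdd
  have hdiff : Tendsto (fun n => a n - a (n + 1)) atTop (𝓝 0) := by
    have h1 : Tendsto (fun n => a (n + 1)) atTop (𝓝 (⨅ n, a n)) :=
      hconvA.comp (tendsto_add_atTop_nat 1)
    have := hconvA.sub h1
    simpa using this
  -- the residuals tend to zero
  have hF2 : Tendsto (fun n => ‖F (qseq n)‖ ^ 2) atTop (𝓝 0) := by
    have hb : ∀ n, ‖F (qseq n)‖ ^ 2 ≤ (a n - a (n + 1)) / c := by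
      intro n
      have := (step n (inv n).1 (inv n).2).2
      rw [le_div_iff₀ hc]
      simp only [hadef]
      nlinarith
    have hg : Tendsto (fun n => (a n - a (n + 1)) / c) atTop (𝓝 0) := by
      have := hdiff.div_const c
      simpa using this
    exact squeeze_zero (fun n => sq_nonneg _) hb hg
  have hFn : Tendsto (fun n => ‖F (qseq n)‖) atTop (𝓝 0) := by
    have h1 := hF2.sqrt
    rw [Real.sqrt_zero] at h1
    have h2 : (fun n => Real.sqrt (‖F (qseq n)‖ ^ 2)) = fun n => ‖F (qseq n)‖ := by
      funext n
      exact Real.sqrt_sq (norm_nonneg _)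
    rwa [h2] at h1
  -- the errors tend to zero via the lower bound
  have herr : ∀ n, ‖qseq n - qstar‖ ≤ (3 / (2 * C)) * ‖F (qseq n)‖ := by
    intro n
    obtain ⟨hQn, hεn⟩ := inv n
    have h1 : C * ‖qseq n - qstar‖ ≤ ‖DF (qseq n) (qseq n - qstar)‖ :=
      hlower (qseq n) hQn (qseq n - qstar)
    have h2 : ‖F (qseq n) - DF (qseq n) (qseq n - qstar)‖ ≤ η * ‖F (qseq n)‖ :=
      cone' (qseq n) hQn hεn
    have h3 : ‖DF (qseq n) (qseq n - qstar)‖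
        ≤ ‖F (qseq n) - DF (qseq n) (qseq n - qstar)‖ + ‖F (qseq n)‖ := by
      have := norm_add_le (DF (qseq n) (qseq n - qstar) - F (qseq n)) (F (qseq n))
      rw [sub_add_cancel, norm_sub_rev (DF (qseq n) (qseq n - qstar))] at this
      exact this
    have h4 : C * ‖qseq n - qstar‖ ≤ (3 / 2) * ‖F (qseq n)‖ := by
      have hFnn : (0:ℝ) ≤ ‖F (qseq n)‖ := norm_nonneg _
      nlinarith
    have hFnn : (0:ℝ) ≤ ‖F (qseq n)‖ := norm_nonneg _
    rw [div_mul_eq_mul_div, le_div_iff₀ (by positivity)]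
    nlinarith
  have herr0 : Tendsto (fun n => ‖qseq n - qstar‖) atTop (𝓝 0) := by
    have hg : Tendsto (fun n => (3 / (2 * C)) * ‖F (qseq n)‖) atTop (𝓝 0) := by
      have := hFn.const_mul (3 / (2 * C))
      simpa using this
    exact squeeze_zero (fun n => norm_nonneg _) herr hg
  exact tendsto_iff_norm_sub_tendsto_zero.mpr herr0
end
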